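/- Let v = e^{2πi/3}, 0 < λ < 1, f_C(z) = 1 + λ(1+v)z, f_E(z) = -v - λvz. Write z = a + b(1+v) (a, b real). If a > -λ⁻¹ and b > λ⁻¹ + λ⁻², then f_E(f_C(z)) = α + β(1+v) with α = 1 + λ + aλ² and β = λ²b - λ - 1. Consequently, if additionally λ⁻¹+⋯+λ^{-2n+2} < b < λ⁻¹+⋯+λ^{-2n} for some n ≥ 2, then α > 1 and λ⁻¹+⋯+λ^{-2n+4} < β < λ⁻¹+⋯+λ^{-2n+2} (i.e., f²(C_n) ⊂ C_{n-1}). -/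

import Mathlib

/-! With `v` a primitive cube root of unity, `v ^ 2 = -1 - v`, so `f_E ∘ f_C` is affine in the
real coordinates `(a, b)` of `z = a + b (1 + v)`: it acts as `a ↦ 1 + λ + λ² a` and
`b ↦ λ² b - λ - 1`. Multiplying `λ⁻¹ + ⋯ + λ^{-(m+2)}` by `λ²` gives
`λ + 1 + λ⁻¹ + ⋯ + λ^{-m}`, so the second map sends the `b`-window of `C_n` onto that of
`C_{n-1}`, while `a > -λ⁻¹` gives `λ + λ² a > 0`. -/

open Finset

theorem exp_two_pi_I_div_three_sq_add_self_add_one :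
    Complex.exp (2 * Real.pi * Complex.I / 3) ^ 2 + Complex.exp (2 * Real.pi * Complex.I / 3) + 1
      = 0 := by
  have h := (Complex.isPrimitiveRoot_exp 3 (by norm_num)).geom_sum_eq_zero (by norm_num)
  simp only [sum_range_succ, sum_range_zero, pow_zero, pow_one, Nat.cast_ofNat] at h
  linear_combination h

theorem affine_comp_of_sq_add_self_add_one {v : ℂ} (hv : v ^ 2 + v + 1 = 0) (lam a b : ℝ) :
    -v - (lam : ℂ) * v * (1 + (lam : ℂ) * (1 + v) * ((a : ℂ) + (b : ℂ) * (1 + v))) =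
      ((1 + lam + a * lam ^ 2 : ℝ) : ℂ) + ((lam ^ 2 * b - lam - 1 : ℝ) : ℂ) * (1 + v) := by
  push_cast
  linear_combination (-(lam : ℂ) ^ 2 * (a + b + b * v)) * hv

theorem sq_mul_sum_Icc_inv_pow_add_two {lam : ℝ} (hlam : lam ≠ 0) (m : ℕ) :
    lam ^ 2 * ∑ j ∈ Icc 1 (m + 2), lam⁻¹ ^ j = ∑ j ∈ Icc 1 m, lam⁻¹ ^ j + lam + 1 := by
  induction m with
  | zero =>
    rw [show Icc 1 (0 + 2) = {1, 2} from rfl, sum_pair (by norm_num)]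
    field_simp
    simp
  | succ k ih =>
    rw [show k + 1 + 2 = k + 2 + 1 by ring, sum_Icc_succ_top (by omega), mul_add, ih,
      sum_Icc_succ_top (by omega), pow_add lam⁻¹ (k + 1) 2]
    field_simp
    ring

theorem stmt8_general (lam : ℝ) (h0 : 0 < lam)
    (v : ℂ) (hv : v = Complex.exp (2 * Real.pi * Complex.I / 3))
    (fC : ℂ → ℂ) (hfC : ∀ z, fC z = 1 + (lam : ℂ) * (1 + v) * z)
    (fE : ℂ → ℂ) (hfE : ∀ z, fE z = -v - (lam : ℂ) * v * z)
    (a b : ℝ) (ha : -lam⁻¹ < a) :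
    fE (fC ((a : ℂ) + (b : ℂ) * (1 + v))) =
      ((1 + lam + a * lam ^ 2 : ℝ) : ℂ) + ((lam ^ 2 * b - lam - 1 : ℝ) : ℂ) * (1 + v) ∧
    (∀ n : ℕ, 2 ≤ n →
      (∑ j ∈ Finset.Icc 1 (2 * n - 2), lam⁻¹ ^ j) < b →
      b < (∑ j ∈ Finset.Icc 1 (2 * n), lam⁻¹ ^ j) →
      1 < 1 + lam + a * lam ^ 2 ∧
      (∑ j ∈ Finset.Icc 1 (2 * n - 4), lam⁻¹ ^ j) < lam ^ 2 * b - lam - 1 ∧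
      lam ^ 2 * b - lam - 1 < ∑ j ∈ Finset.Icc 1 (2 * n - 2), lam⁻¹ ^ j) := by
  refine ⟨?_, fun n hn hlo hhi => ?_⟩
  · rw [hfC, hfE, hv]
    exact affine_comp_of_sq_add_self_add_one exp_two_pi_I_div_three_sq_add_self_add_one lam a b
  have hsq : 0 < lam ^ 2 := by positivity
  have hlo' := sq_mul_sum_Icc_inv_pow_add_two h0.ne' (2 * n - 4)
  have hhi' := sq_mul_sum_Icc_inv_pow_add_two h0.ne' (2 * n - 2)
  rw [show 2 * n - 4 + 2 = 2 * n - 2 by omega] at hlo'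
  rw [show 2 * n - 2 + 2 = 2 * n by omega] at hhi'
  have ha' : -lam < a * lam ^ 2 := by
    simpa [h0.ne', sq, ← mul_assoc] using mul_lt_mul_of_pos_right ha hsq
  refine ⟨by linarith, ?_, ?_⟩
  · linarith [mul_lt_mul_of_pos_left hlo hsq]
  · linarith [mul_lt_mul_of_pos_left hhi hsq]

theorem stmt8 (lam : ℝ) (h0 : 0 < lam) (h1 : lam < 1)
    (v : ℂ) (hv : v = Complex.exp (2 * Real.pi * Complex.I / 3))
    (fC : ℂ → ℂ) (hfC : ∀ z, fC z = 1 + (lam : ℂ) * (1 + v) * z)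
    (fE : ℂ → ℂ) (hfE : ∀ z, fE z = -v - (lam : ℂ) * v * z)
    (a b : ℝ) (ha : -lam⁻¹ < a) (hb : lam⁻¹ + lam⁻¹ ^ 2 < b) :
    fE (fC ((a : ℂ) + (b : ℂ) * (1 + v))) =
      ((1 + lam + a * lam ^ 2 : ℝ) : ℂ) + ((lam ^ 2 * b - lam - 1 : ℝ) : ℂ) * (1 + v) ∧
    (∀ n : ℕ, 2 ≤ n →
      (∑ j ∈ Finset.Icc 1 (2 * n - 2), lam⁻¹ ^ j) < b →
      b < (∑ j ∈ Finset.Icc 1 (2 * n), lam⁻¹ ^ j) →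
      1 < 1 + lam + a * lam ^ 2 ∧
      (∑ j ∈ Finset.Icc 1 (2 * n - 4), lam⁻¹ ^ j) < lam ^ 2 * b - lam - 1 ∧
      lam ^ 2 * b - lam - 1 < ∑ j ∈ Finset.Icc 1 (2 * n - 2), lam⁻¹ ^ j) :=
  stmt8_general lam h0 v hv fC hfC fE hfE a b ha
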